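/- Let G = (V, E) be a finite, strongly connected directed network with arc capacities c : E → ℝ and imports b : V → ℝ. Suppose that ∑_{v ∈ V} b(v) = 0 and that c(e) ≥ 2 · ∑_{v ∈ V} max(b(v), 0) for every arc e ∈ E. Then there exists a feasible flow on G. -/

import Mathlib

/-!
Fix a root `r`. Send the supply of every vertex to `r`, and the demand of every vertex from `r`,
along simple paths; these exist by strong connectivity. The superposition of these path flows
balances every vertex because the imports sum to zero, and since a simple path crosses each arc at
most once, no arc carries more than total supply plus total demand, that is, twice the total
supply.
-/

open Finset Relation

theorem List.exists_nodup_isChain_cons_of_relationReflTransGen {α : Type*} {r : α → α → Prop}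
    {a b : α} (h : ReflTransGen r a b) :
    ∃ l, IsChain r (a :: l) ∧ (a :: l).Nodup ∧ getLast (a :: l) (cons_ne_nil _ _) = b := by
  induction h using ReflTransGen.head_induction_on with
  | refl => exact ⟨[], .singleton _, nodup_singleton _, rfl⟩
  | @head c d hcd _ ih =>
    obtain ⟨l, hchain, hnodup, hlast⟩ := ih
    by_cases hc : c ∈ d :: l
    · -- cut the cycle through `c`
      obtain ⟨p, q, hpq⟩ := append_of_mem hc
      have hsuffix : c :: q <:+ d :: l := ⟨p, hpq.symm⟩
      refine ⟨q, hchain.suffix hsuffix, hsuffix.sublist.nodup hnodup, ?_⟩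
      simp_rw [← hlast, hpq, getLast_append_of_ne_nil _ (cons_ne_nil c q)]
    · exact ⟨d :: l, hchain.cons_cons hcd, hnodup.cons hc, by rwa [getLast_cons_cons]⟩

theorem sum_negPart_eq_sum_posPart {ι α : Type*} [Lattice α] [AddCommGroup α] [AddLeftMono α]
    (s : Finset ι) {b : ι → α} (hb : ∑ i ∈ s, b i = 0) :
    ∑ i ∈ s, (b i)⁻ = ∑ i ∈ s, (b i)⁺ := by
  rw [← sub_eq_zero, ← neg_eq_zero, neg_sub, ← sum_sub_distrib, ← hb]
  exact sum_congr rfl fun i _ => posPart_sub_negPart (b i)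

section NetInflow

variable {V : Type*} [Fintype V]

def netInflow : (V × V → ℝ) →ₗ[ℝ] V → ℝ where
  toFun f v := ∑ u, f (u, v) - ∑ w, f (v, w)
  map_add' f g := by
    ext v
    simp only [Pi.add_apply, sum_add_distrib]
    ring
  map_smul' a f := by
    ext v
    simp only [Pi.smul_apply, smul_eq_mul, ← mul_sum, ← mul_sub, RingHom.id_apply]

theorem netInflow_apply (f : V × V → ℝ) (v : V) :
    netInflow f v = ∑ u, f (u, v) - ∑ w, f (v, w) := rfl

theorem netInflow_single [DecidableEq V] (a b : V) :
    netInflow (Pi.single (a, b) 1) = Pi.single b 1 - Pi.single a 1 := by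
  ext v
  simp only [netInflow_apply, Pi.single_apply, Prod.mk.injEq, ite_and, sum_ite_eq', mem_univ,
    if_true, Pi.sub_apply]
  split_ifs <;> simp_all

theorem netInflow_apply_eq_sum_ite {E : Set (V × V)} [DecidablePred (· ∈ E)]
    {f : V × V → ℝ} (hf : ∀ e ∉ E, f e = 0) (v : V) :
    netInflow f v = (∑ u, if (u, v) ∈ E then f (u, v) else 0)
      - ∑ w, if (v, w) ∈ E then f (v, w) else 0 := by
  have hsum (g : V → V × V) : ∑ u, f (g u) = ∑ u, if g u ∈ E then f (g u) else 0 :=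
    sum_congr rfl fun u _ => by split_ifs with h; exacts [rfl, hf _ h]
  rw [netInflow_apply, hsum, hsum]

end NetInflow

section PathFlow

variable {V : Type*} [DecidableEq V]

def pathFlow : List V → V × V → ℝ
  | a :: b :: l => Pi.single (a, b) 1 + pathFlow (b :: l)
  | _ => 0

@[simp] theorem pathFlow_singleton (a : V) : pathFlow [a] = 0 := rfl

theorem pathFlow_cons_cons (a b : V) (l : List V) :
    pathFlow (a :: b :: l) = Pi.single (a, b) 1 + pathFlow (b :: l) := rfl

theorem netInflow_pathFlow [Fintype V] (a : V) (l : List V) :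
    netInflow (pathFlow (a :: l)) =
      Pi.single ((a :: l).getLast (List.cons_ne_nil a l)) 1 - Pi.single a 1 := by
  induction l generalizing a with
  | nil => simp
  | cons b l ih =>
    rw [pathFlow_cons_cons, map_add, netInflow_single, ih, List.getLast_cons_cons]
    abel

theorem pathFlow_nonneg : ∀ l : List V, 0 ≤ pathFlow l
  | _ :: b :: l => add_nonneg (Pi.single_nonneg.2 zero_le_one) (pathFlow_nonneg (b :: l))
  | [] | [_] => le_rfl

theorem pathFlow_apply_eq_zero_of_fst_notMem :
    ∀ {l : List V} {e : V × V}, e.1 ∉ l → pathFlow l e = 0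
  | a :: b :: l, e, he => by
    have hea : e ≠ (a, b) := fun h => he (h ▸ List.mem_cons_self)
    rw [pathFlow_cons_cons, Pi.add_apply, Pi.single_eq_of_ne hea,
      pathFlow_apply_eq_zero_of_fst_notMem (List.not_mem_of_not_mem_cons he), zero_add]
  | [], _, _ | [_], _, _ => rfl

theorem pathFlow_apply_eq_zero_of_not_rel {R : V → V → Prop} :
    ∀ {l : List V}, l.IsChain R → ∀ {e : V × V}, ¬R e.1 e.2 → pathFlow l e = 0
  | a :: b :: l, hl, e, he => by
    rw [List.isChain_cons_cons] at hl
    have hea : e ≠ (a, b) := by rintro rfl; exact he hl.1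
    rw [pathFlow_cons_cons, Pi.add_apply, Pi.single_eq_of_ne hea,
      pathFlow_apply_eq_zero_of_not_rel hl.2 he, zero_add]
  | [], _, _, _ | [_], _, _, _ => rfl

theorem pathFlow_apply_le_one : ∀ {l : List V}, l.Nodup → ∀ e, pathFlow l e ≤ 1
  | a :: b :: l, hl, e => by
    rw [List.nodup_cons] at hl
    rw [pathFlow_cons_cons, Pi.add_apply]
    by_cases hea : e = (a, b)
    · subst hea
      rw [Pi.single_eq_same, pathFlow_apply_eq_zero_of_fst_notMem hl.1, add_zero]
    · rw [Pi.single_eq_of_ne hea, zero_add]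
      exact pathFlow_apply_le_one hl.2 e
  | [], _, _ | [_], _, _ => zero_le_one

end PathFlow

section StarFlow

variable {V : Type*} [Fintype V] [DecidableEq V]

theorem sum_smul_single_sub_single (b : V → ℝ) (r : V) :
    ∑ w, b w • (Pi.single r 1 - Pi.single w 1 : V → ℝ) = (∑ w, b w) • Pi.single r 1 - b := by
  simp only [smul_sub, sum_sub_distrib, ← sum_smul]
  congr 1
  simp only [← Pi.single_smul, smul_eq_mul, mul_one, univ_sum_single]

theorem exists_flow_netInflow_eq_neg {R : V → V → Prop} (r : V)
    (hto : ∀ v, ReflTransGen R v r) (hfrom : ∀ v, ReflTransGen R r v)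
    {b : V → ℝ} (hb : ∑ v, b v = 0) :
    ∃ f : V × V → ℝ, (∀ e, ¬R e.1 e.2 → f e = 0) ∧
      (∀ e, 0 ≤ f e ∧ f e ≤ ∑ v, (b v)⁺ + ∑ v, (b v)⁻) ∧ netInflow f = -b := by
  choose P hPchain hPnodup hPlast using
    fun v => List.exists_nodup_isChain_cons_of_relationReflTransGen (hto v)
  choose Q hQchain hQnodup hQlast using
    fun v => List.exists_nodup_isChain_cons_of_relationReflTransGen (hfrom v)
  refine ⟨∑ w, ((b w)⁺ • pathFlow (w :: P w) + (b w)⁻ • pathFlow (r :: Q w)),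
    fun e he => ?_, fun e => ?_, ?_⟩
  · simp only [Finset.sum_apply, Pi.add_apply, Pi.smul_apply, smul_eq_mul,
      pathFlow_apply_eq_zero_of_not_rel (hPchain _) he,
      pathFlow_apply_eq_zero_of_not_rel (hQchain _) he, mul_zero, add_zero, sum_const_zero]
  · simp only [Finset.sum_apply, Pi.add_apply, Pi.smul_apply, smul_eq_mul]
    refine ⟨sum_nonneg fun w _ => ?_, ?_⟩
    · exact add_nonneg (mul_nonneg (posPart_nonneg _) (pathFlow_nonneg _ e))
        (mul_nonneg (negPart_nonneg _) (pathFlow_nonneg _ e))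
    · rw [← sum_add_distrib]
      refine sum_le_sum fun w _ => add_le_add ?_ ?_
      · exact mul_le_of_le_one_right (posPart_nonneg _) (pathFlow_apply_le_one (hPnodup w) e)
      · exact mul_le_of_le_one_right (negPart_nonneg _) (pathFlow_apply_le_one (hQnodup w) e)
  · simp only [map_sum, map_add, map_smul, netInflow_pathFlow, hPlast, hQlast]
    calc _ = ∑ w, b w • (Pi.single r 1 - Pi.single w 1 : V → ℝ) := by
          refine sum_congr rfl fun w _ => ?_
          rw [← neg_sub (Pi.single r 1), smul_neg, ← sub_eq_add_neg, ← sub_smul,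
            posPart_sub_negPart]
      _ = -b := by rw [sum_smul_single_sub_single, hb, zero_smul, zero_sub]

end StarFlow

open Classical in
theorem stmt_1_general {V : Type*} [Fintype V]
    (E : Set (V × V)) (c : V × V → ℝ) (b : V → ℝ)
    (hconn : ∀ u v : V, Relation.ReflTransGen (fun a b => (a, b) ∈ E) u v)
    (hbsum : ∑ v, b v = 0)
    (hc : ∀ e ∈ E, 2 * ∑ v, max (b v) 0 ≤ c e) :
    ∃ f : V × V → ℝ,
      (∀ e ∈ E, 0 ≤ f e ∧ f e ≤ c e) ∧
      ∀ v : V, b v + (∑ u, if (u, v) ∈ E then f (u, v) else 0)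
        - (∑ w, if (v, w) ∈ E then f (v, w) else 0) = 0 := by
  rcases isEmpty_or_nonempty V with _ | ⟨⟨r⟩⟩
  · exact ⟨0, fun e _ => isEmptyElim e.1, isEmptyElim⟩
  obtain ⟨f, hfE, hf, hnet⟩ := exists_flow_netInflow_eq_neg r (hconn · r) (hconn r) hbsum
  have htotal : ∑ v, (b v)⁺ + ∑ v, (b v)⁻ = 2 * ∑ v, max (b v) 0 := by
    rw [sum_negPart_eq_sum_posPart _ hbsum, two_mul]
    rfl
  refine ⟨f, fun e he => ⟨(hf e).1, (hf e).2.trans (htotal ▸ hc e he)⟩, fun v => ?_⟩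
  rw [add_sub_assoc, ← netInflow_apply_eq_sum_ite hfE, hnet, Pi.neg_apply, add_neg_cancel]

open Classical in
/-- In a finite, strongly connected directed network with imports summing to zero
and every arc capacity at least twice the total supply, a feasible flow exists. -/
theorem stmt_1 {V : Type*} [Fintype V]
    (E : Set (V × V)) (c : V × V → ℝ) (b : V → ℝ)
    (hconn : ∀ u v : V, Relation.ReflTransGen (fun a b => (a, b) ∈ E) u v)
    (hcap : ∀ e ∈ E, 0 ≤ c e)
    (hbsum : ∑ v, b v = 0)
    (hc : ∀ e ∈ E, 2 * ∑ v, max (b v) 0 ≤ c e) :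
    ∃ f : V × V → ℝ,
      (∀ e ∈ E, 0 ≤ f e ∧ f e ≤ c e) ∧
      ∀ v : V, b v + (∑ u, if (u, v) ∈ E then f (u, v) else 0)
        - (∑ w, if (v, w) ∈ E then f (v, w) else 0) = 0 :=
  stmt_1_general E c b hconn hbsum hc
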